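/- (Theorem on the sequential algorithm with smoothing.) Let K ⊆ ℝⁿ be a closed convex cone with dual cone K*, let ψ : ℝⁿ → ℝ be concave with ψ(0) = 0, and let ψ_S : ℝⁿ → ℝ be concave and differentiable with ψ_S(0) = 0 and gradient antitone on K: whenever u, v ∈ K and u − v ∈ K, ∇ψ_S(v) − ∇ψ_S(u) ∈ K*. For t ∈ {1,…,m} let F_t ⊆ ℝᵏ and A_t : ℝᵏ → ℝⁿ linear with A_t x ∈ K for all x ∈ F_t. Suppose c ∈ K satisfies c − A_t x ∈ K for all t and all x ∈ F_t, and let κ ∈ ℝ satisfy ⟨c, ∇ψ_S(0) − ∇ψ_S(u)⟩ ≤ κ·ψ(u) for all u ∈ K. Let ᾱ ∈ ℝ satisfy: for all u ∈ K and all w ∈ ℝⁿ, ⟨∇ψ_S(u), w⟩ − ψ(w) ≥ ψ_S(u) + (ᾱ − 1)·ψ(u). Set u₀ = 0 and u_t = ∑_{s=1}^t A_s x̂_s, and suppose x̂_t ∈ F_t satisfies ⟨x̂_t, A_tᵀ ∇ψ_S(u_{t−1})⟩ ≥ ⟨x, A_tᵀ ∇ψ_S(u_{t−1})⟩ for all x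 ∈ F_t. Then for every choice of x'_t ∈ F_t and every w ∈ ℝⁿ: (1 − ᾱ + κ)·ψ(u_m) ≥ ∑_{t=1}^m ⟨A_t x'_t, ∇ψ_S(u_m)⟩ − ⟨∇ψ_S(u_m), w⟩ + ψ(w). (This says P_seq ≥ D★/(1 − ᾱ_{ψ,ψ_S} + κ_{c,ψ,ψ_S}).) -/

import Mathlib

open RealInnerProductSpace

def dualCone {n : ℕ} (K : Set (EuclideanSpace ℝ (Fin n))) :
    Set (EuclideanSpace ℝ (Fin n)) :=
  {y | ∀ u ∈ K, 0 ≤ ⟪y, u⟫}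

/-!
Write `u (t + 1) = u t + a t` with `a t = A t (xt t)`, and let `g = ∇ψ_S`. Since `g` is antitone
along `K` and `u m - u t ∈ K`, a competitor's gain `⟪A t (x' t), g (u m)⟫` is at most its gain
against `g (u t)`, which the greedy choice bounds by `⟪a t, g (u t)⟫`. Splitting
`g (u t) = g (u (t + 1)) + (g (u t) - g (u (t + 1)))`, concavity of `ψ_S` bounds the first part
by `ψ_S (u (t + 1)) - ψ_S (u t)`, and `c - a t ∈ K` bounds the second by
`⟪c, g (u t) - g (u (t + 1))⟫`. Both bounds telescope, so the competitor's total gain is at most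
`ψ_S (u m) + ⟪c, g 0 - g (u m)⟫`; the defining inequalities of `κ` and `ᾱ` at `u m` finish.
-/

open Finset

theorem ConcaveOn.le_add_of_hasFDerivAt {E : Type*} [NormedAddCommGroup E] [NormedSpace ℝ E]
    {f : E → ℝ} {f' : E →L[ℝ] ℝ} {u : E} (hf : ConcaveOn ℝ Set.univ f)
    (hf' : HasFDerivAt f f' u) (v : E) :
    f v ≤ f u + f' (v - u) := by
  set line : ℝ → E := fun t => u + t • (v - u)
  have hline : ConcaveOn ℝ Set.univ (f ∘ line) := by
    simpa [line, Function.comp_def, add_comm] using hf.comp_affineMap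
      (AffineMap.const ℝ ℝ u + (LinearMap.toSpanSingleton ℝ E (v - u)).toAffineMap)
  have hderiv : HasDerivAt (f ∘ line) (f' (v - u)) 0 := by
    have hline' : HasDerivAt line (v - u) 0 := by
      simpa [line] using ((hasDerivAt_id (0 : ℝ)).smul_const (v - u)).const_add u
    exact (by simpa [line] using hf' : HasFDerivAt f f' (line 0)).comp_hasDerivAt 0 hline'
  have hslope := hline.slope_le_of_hasDerivAt (Set.mem_univ 0) (Set.mem_univ 1) one_pos hderiv
  rw [show slope (f ∘ line) 0 1 = f v - f u by simp [slope_def_field, line]] at hslope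
  linarith

theorem ConcaveOn.le_add_inner_of_hasGradientAt {F : Type*} [NormedAddCommGroup F]
    [InnerProductSpace ℝ F] [CompleteSpace F] {f : F → ℝ} {g u : F}
    (hf : ConcaveOn ℝ Set.univ f) (hg : HasGradientAt f g u) (v : F) :
    f v ≤ f u + ⟪g, v - u⟫ := by
  simpa using hf.le_add_of_hasFDerivAt hg.hasFDerivAt v

theorem zero_mem_of_isClosed_of_smul_mem {E : Type*} [AddCommGroup E] [Module ℝ E]
    [TopologicalSpace E] [ContinuousSMul ℝ E] {K : Set E} (hK : IsClosed K)
    (hsmul : ∀ r : ℝ, 0 < r → ∀ u ∈ K, r • u ∈ K) {c : E} (hc : c ∈ K) :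
    (0 : E) ∈ K := by
  have hlim : Filter.Tendsto (fun j : ℕ => (1 / (j + 1) : ℝ) • c) Filter.atTop (nhds 0) := by
    simpa using (tendsto_one_div_add_atTop_nhds_zero_nat (𝕜 := ℝ)).smul_const c
  exact hK.mem_of_tendsto hlim (Filter.Eventually.of_forall fun j => hsmul _ (by positivity) c hc)

theorem add_mem_of_convex_of_smul_mem {E : Type*} [AddCommGroup E] [Module ℝ E] {K : Set E}
    (hK : Convex ℝ K) (hsmul : ∀ r : ℝ, 0 < r → ∀ u ∈ K, r • u ∈ K) {a b : E}
    (ha : a ∈ K) (hb : b ∈ K) :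
    a + b ∈ K := by
  have hmid := hK ha hb (by norm_num : (0 : ℝ) ≤ 1 / 2) (by norm_num : (0 : ℝ) ≤ 1 / 2)
    (by norm_num)
  convert hsmul 2 two_pos _ hmid using 1
  rw [smul_add, smul_smul, smul_smul]
  norm_num

theorem inner_le_inner_of_sub_mem_dualCone {n : ℕ} {K : Set (EuclideanSpace ℝ (Fin n))}
    {y z x : EuclideanSpace ℝ (Fin n)} (h : y - z ∈ dualCone K) (hx : x ∈ K) :
    ⟪z, x⟫ ≤ ⟪y, x⟫ := by
  have := h x hx
  rw [inner_sub_left] at this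
  linarith

section GreedyWithSmoothing

variable {n : ℕ} {K : Set (EuclideanSpace ℝ (Fin n))} {ψS : EuclideanSpace ℝ (Fin n) → ℝ}
  {g : EuclideanSpace ℝ (Fin n) → EuclideanSpace ℝ (Fin n)}

theorem inner_gradient_le_of_greedy_step (hψS : ConcaveOn ℝ Set.univ ψS)
    (hg : ∀ u, HasGradientAt ψS (g u) u)
    (hantitone : ∀ u ∈ K, ∀ v ∈ K, u - v ∈ K → g v - g u ∈ dualCone K)
    {u a b c w : EuclideanSpace ℝ (Fin n)} (hu : u ∈ K) (ha : a ∈ K) (hua : u + a ∈ K)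
    (hb : b ∈ K) (hca : c - a ∈ K) (hw : w ∈ K) (hwu : w - u ∈ K)
    (hgreedy : ⟪b, g u⟫ ≤ ⟪a, g u⟫) :
    ⟪b, g w⟫ ≤ ψS (u + a) - ψS u + ⟪c, g u - g (u + a)⟫ := by
  have hconcave : ⟪a, g (u + a)⟫ ≤ ψS (u + a) - ψS u := by
    have := hψS.le_add_inner_of_hasGradientAt (hg (u + a)) u
    rw [show u - (u + a) = -a by abel, inner_neg_right, real_inner_comm] at this
    linarith
  have hdual : g u - g (u + a) ∈ dualCone K := hantitone (u + a) hua u hu (by simpa using ha)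
  calc ⟪b, g w⟫ ≤ ⟪b, g u⟫ := by
        rw [real_inner_comm (g w), real_inner_comm (g u)]
        exact inner_le_inner_of_sub_mem_dualCone (hantitone w hw u hu hwu) hb
    _ ≤ ⟪a, g u⟫ := hgreedy
    _ = ⟪a, g (u + a)⟫ + ⟪g u - g (u + a), a⟫ := by
        rw [inner_sub_left, real_inner_comm a, real_inner_comm a]
        ring
    _ ≤ ψS (u + a) - ψS u + ⟪g u - g (u + a), c⟫ := by
        gcongr
        have := hdual (c - a) hca
        rw [inner_sub_right] at this
        linarith
    _ = ψS (u + a) - ψS u + ⟪c, g u - g (u + a)⟫ := by rw [real_inner_comm]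

theorem sum_inner_gradient_le_of_greedy (hψS : ConcaveOn ℝ Set.univ ψS)
    (hg : ∀ u, HasGradientAt ψS (g u) u)
    (hantitone : ∀ u ∈ K, ∀ v ∈ K, u - v ∈ K → g v - g u ∈ dualCone K)
    (hK0 : 0 ∈ K) (hKadd : ∀ a b, a ∈ K → b ∈ K → a + b ∈ K)
    {m : ℕ} {a b : ℕ → EuclideanSpace ℝ (Fin n)} {c : EuclideanSpace ℝ (Fin n)}
    (ha : ∀ t < m, a t ∈ K) (hb : ∀ t < m, b t ∈ K) (hca : ∀ t < m, c - a t ∈ K)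
    {u : ℕ → EuclideanSpace ℝ (Fin n)} (hu : ∀ t, u t = ∑ s ∈ range t, a s)
    (hgreedy : ∀ t < m, ⟪b t, g (u t)⟫ ≤ ⟪a t, g (u t)⟫) :
    ∑ t ∈ range m, ⟪b t, g (u m)⟫ ≤ ψS (u m) - ψS 0 + ⟪c, g 0 - g (u m)⟫ := by
  have hincr : ∀ t t', t ≤ t' → t' ≤ m → u t' - u t ∈ K := by
    intro t t' htt' ht'
    rw [hu, hu, ← sum_range_add_sum_Ico _ htt', add_sub_cancel_left]
    exact sum_induction _ (· ∈ K) hKadd hK0 fun s hs => ha s ((mem_Ico.1 hs).2.trans_le ht')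
  have hu0 : u 0 = 0 := by simp [hu]
  have huK : ∀ t ≤ m, u t ∈ K := fun t ht => by simpa [hu0] using hincr 0 t t.zero_le ht
  have hsucc : ∀ t, u (t + 1) = u t + a t := fun t => by rw [hu, hu, sum_range_succ]
  calc ∑ t ∈ range m, ⟪b t, g (u m)⟫
      ≤ ∑ t ∈ range m, (ψS (u (t + 1)) - ψS (u t) + (⟪c, g (u t)⟫ - ⟪c, g (u (t + 1))⟫)) := by
        refine sum_le_sum fun t ht => ?_
        have ht : t < m := mem_range.1 ht
        rw [← inner_sub_right, hsucc]
        exact inner_gradient_le_of_greedy_step hψS hg hantitone (huK t ht.le) (ha t ht)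
          (hsucc t ▸ huK (t + 1) ht) (hb t ht) (hca t ht) (huK m le_rfl) (hincr t m ht.le le_rfl)
          (hgreedy t ht)
    _ = ψS (u m) - ψS 0 + ⟪c, g 0 - g (u m)⟫ := by
        rw [sum_add_distrib, sum_range_sub (fun t => ψS (u t)),
          sum_range_sub' (fun t => ⟪c, g (u t)⟫), hu0, inner_sub_right]

end GreedyWithSmoothing

theorem stmt_16_general {n k m : ℕ}
    (K : Set (EuclideanSpace ℝ (Fin n)))
    (hKclosed : IsClosed K) (hKconvex : Convex ℝ K)
    (hKcone : ∀ c : ℝ, 0 < c → ∀ u ∈ K, c • u ∈ K)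
    (ψ ψS : EuclideanSpace ℝ (Fin n) → ℝ)
    (hψS : ConcaveOn ℝ Set.univ ψS) (hψS0 : ψS 0 = 0)
    (g : EuclideanSpace ℝ (Fin n) → EuclideanSpace ℝ (Fin n))
    (hg : ∀ u, HasGradientAt ψS (g u) u)
    (hantitone : ∀ u ∈ K, ∀ v ∈ K, u - v ∈ K → g v - g u ∈ dualCone K)
    (F : ℕ → Set (EuclideanSpace ℝ (Fin k)))
    (A : ℕ → EuclideanSpace ℝ (Fin k) →ₗ[ℝ] EuclideanSpace ℝ (Fin n))
    (hA : ∀ t < m, ∀ x ∈ F t, A t x ∈ K)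
    (c : EuclideanSpace ℝ (Fin n)) (hc : c ∈ K)
    (hcb : ∀ t < m, ∀ x ∈ F t, c - A t x ∈ K)
    (κ : ℝ) (hκ : ∀ u ∈ K, ⟪c, g 0 - g u⟫ ≤ κ * ψ u)
    (α : ℝ)
    (hα : ∀ u ∈ K, ∀ w : EuclideanSpace ℝ (Fin n),
      ψS u + (α - 1) * ψ u ≤ ⟪g u, w⟫ - ψ w)
    (xt : ℕ → EuclideanSpace ℝ (Fin k))
    (hxt : ∀ t < m, xt t ∈ F t)
    (u : ℕ → EuclideanSpace ℝ (Fin n))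
    (hu : ∀ t, u t = ∑ s ∈ Finset.range t, A s (xt s))
    (hmax : ∀ t < m, ∀ x ∈ F t, ⟪A t x, g (u t)⟫ ≤ ⟪A t (xt t), g (u t)⟫)
    (x' : ℕ → EuclideanSpace ℝ (Fin k))
    (hx' : ∀ t < m, x' t ∈ F t)
    (w : EuclideanSpace ℝ (Fin n)) :
    (∑ t ∈ Finset.range m, ⟪A t (x' t), g (u m)⟫) - ⟪g (u m), w⟫ + ψ w ≤
      (1 - α + κ) * ψ (u m) := by
  have hK0 : 0 ∈ K := zero_mem_of_isClosed_of_smul_mem hKclosed hKcone hc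
  have hKadd : ∀ a b, a ∈ K → b ∈ K → a + b ∈ K := fun _ _ ha hb =>
    add_mem_of_convex_of_smul_mem hKconvex hKcone ha hb
  have hincrK : ∀ t < m, A t (xt t) ∈ K := fun t ht => hA t ht _ (hxt t ht)
  have humK : u m ∈ K := hu m ▸ sum_induction _ (· ∈ K) hKadd hK0 fun t ht =>
    hincrK t (mem_range.1 ht)
  have hsum := sum_inner_gradient_le_of_greedy hψS hg hantitone hK0 hKadd hincrK
    (fun t ht => hA t ht _ (hx' t ht)) (fun t ht => hcb t ht _ (hxt t ht)) hu
    (fun t ht => hmax t ht _ (hx' t ht))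
  linarith [hκ (u m) humK, hα (u m) humK w]

/-- Sequential algorithm with smoothing `ψ_S` (gradient `g`):
`(1 − ᾱ + κ)·ψ(u_m)` dominates the dual objective of the original problem
evaluated at `∇ψ_S(u_m)`. -/
theorem stmt_16 {n k m : ℕ}
    (K : Set (EuclideanSpace ℝ (Fin n)))
    (hKclosed : IsClosed K) (hKconvex : Convex ℝ K)
    (hKcone : ∀ c : ℝ, 0 < c → ∀ u ∈ K, c • u ∈ K)
    (ψ ψS : EuclideanSpace ℝ (Fin n) → ℝ)
    (hψ : ConcaveOn ℝ Set.univ ψ) (hψ0 : ψ 0 = 0)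
    (hψS : ConcaveOn ℝ Set.univ ψS) (hψS0 : ψS 0 = 0)
    (g : EuclideanSpace ℝ (Fin n) → EuclideanSpace ℝ (Fin n))
    (hg : ∀ u, HasGradientAt ψS (g u) u)
    (hantitone : ∀ u ∈ K, ∀ v ∈ K, u - v ∈ K → g v - g u ∈ dualCone K)
    (F : ℕ → Set (EuclideanSpace ℝ (Fin k)))
    (A : ℕ → EuclideanSpace ℝ (Fin k) →ₗ[ℝ] EuclideanSpace ℝ (Fin n))
    (hA : ∀ t < m, ∀ x ∈ F t, A t x ∈ K)
    (c : EuclideanSpace ℝ (Fin n)) (hc : c ∈ K)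
    (hcb : ∀ t < m, ∀ x ∈ F t, c - A t x ∈ K)
    (κ : ℝ) (hκ : ∀ u ∈ K, ⟪c, g 0 - g u⟫ ≤ κ * ψ u)
    (α : ℝ)
    (hα : ∀ u ∈ K, ∀ w : EuclideanSpace ℝ (Fin n),
      ψS u + (α - 1) * ψ u ≤ ⟪g u, w⟫ - ψ w)
    (xt : ℕ → EuclideanSpace ℝ (Fin k))
    (hxt : ∀ t < m, xt t ∈ F t)
    (u : ℕ → EuclideanSpace ℝ (Fin n))
    (hu : ∀ t, u t = ∑ s ∈ Finset.range t, A s (xt s))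
    (hmax : ∀ t < m, ∀ x ∈ F t, ⟪A t x, g (u t)⟫ ≤ ⟪A t (xt t), g (u t)⟫)
    (x' : ℕ → EuclideanSpace ℝ (Fin k))
    (hx' : ∀ t < m, x' t ∈ F t)
    (w : EuclideanSpace ℝ (Fin n)) :
    (∑ t ∈ Finset.range m, ⟪A t (x' t), g (u m)⟫) - ⟪g (u m), w⟫ + ψ w ≤
      (1 - α + κ) * ψ (u m) :=
  stmt_16_general K hKclosed hKconvex hKcone ψ ψS hψS hψS0 g hg hantitone F A hA c hc hcb κ hκ α hα
    xt hxt u hu hmax x' hx' w
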